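/- arXiv:1507.01934 — 7 statements merged into one kernel-verified Lean document; each statement's English description precedes it below -/
import Mathlib

section
/- Let G be a digraph, k a positive integer, and (S,T) a k-admissible pair of vertex sets with |V(G) ∖ (S ∪ T)| ≤ k + 1. Then G has a gapless S–T separation chain of order at most k. -/
namespace AlmostSemicomplete

variable {V : Type} [Fintype V] [DecidableEq V]

/-- The closed out-neighborhood `N⁺[U]`. -/
def closedOut (E : V → V → Prop) [DecidableRel E] (U : Finset V) : Finset V :=
  U.biUnion fun u => insert u (Finset.univ.filter fun w => E u w)

/-- The closed in-neighborhood `N⁻[U]`. -/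
def closedIn (E : V → V → Prop) [DecidableRel E] (U : Finset V) : Finset V :=
  U.biUnion fun u => insert u (Finset.univ.filter fun w => E w u)

/-- The open out-neighborhood `N⁺(U)`. -/
def openOut (E : V → V → Prop) [DecidableRel E] (U : Finset V) : Finset V :=
  closedOut E U \ U

/-- The open in-neighborhood `N⁻(U)`. -/
def openIn (E : V → V → Prop) [DecidableRel E] (U : Finset V) : Finset V :=
  closedIn E U \ U

/-- `d⁺(U)`, the number of out-neighbors of the set `U`. -/
def dOut (E : V → V → Prop) [DecidableRel E] (U : Finset V) : ℕ := (openOut E U).card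

/-- `d⁻(U)`, the number of in-neighbors of the set `U`. -/
def dIn (E : V → V → Prop) [DecidableRel E] (U : Finset V) : ℕ := (openIn E U).card

/-- Out-neighbors of a vertex. -/
def NoutV (E : V → V → Prop) [DecidableRel E] (v : V) : Finset V :=
  Finset.univ.filter fun w => E v w

/-- In-neighbors of a vertex. -/
def NinV (E : V → V → Prop) [DecidableRel E] (v : V) : Finset V :=
  Finset.univ.filter fun w => E w v

/-- Out-degree of a vertex. -/
def dOutV (E : V → V → Prop) [DecidableRel E] (v : V) : ℕ := (NoutV E v).card

/-- In-degree of a vertex. -/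
def dInV (E : V → V → Prop) [DecidableRel E] (v : V) : ℕ := (NinV E v).card

/-- A separation of a digraph: `A ∪ B = V` and no edge from `A ∖ B` to `B ∖ A`. -/
def IsSep (E : V → V → Prop) (A B : Finset V) : Prop :=
  A ∪ B = Finset.univ ∧ ∀ a ∈ A, a ∉ B → ∀ b ∈ B, b ∉ A → ¬ E a b

/-- An `S`–`T` separation. -/
def IsSTSep (E : V → V → Prop) (S T A B : Finset V) : Prop :=
  IsSep E A B ∧ S ∩ B = ∅ ∧ T ∩ A = ∅

/-- A minimum `S`–`T` separation, i.e. one of smallest order `|A ∩ B|`. -/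
def IsMinSTSep (E : V → V → Prop) (S T X Y : Finset V) : Prop :=
  IsSTSep E S T X Y ∧ ∀ A B : Finset V, IsSTSep E S T A B → (X ∩ Y).card ≤ (A ∩ B).card

/-- A separation chain: a list of separations with the first components nondecreasing
and the second components nonincreasing. -/
def IsSepChain (E : V → V → Prop) (C : List (Finset V × Finset V)) : Prop :=
  (∀ p ∈ C, IsSep E p.1 p.2) ∧ List.Chain' (fun p q => p.1 ⊆ q.1 ∧ q.2 ⊆ p.2) C

/-- A separation chain is gapless if consecutive separations differ by at most one vertex
on at least one side. -/
def Gapless (C : List (Finset V × Finset V)) : Prop :=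
  List.Chain' (fun p q => (q.1 \ p.1).card ≤ 1 ∨ (p.2 \ q.2).card ≤ 1) C

/-- A separation chain is nice if consecutive separations differ by at most one vertex
on both sides. -/
def Nice (C : List (Finset V × Finset V)) : Prop :=
  List.Chain' (fun p q => (q.1 \ p.1).card ≤ 1 ∧ (p.2 \ q.2).card ≤ 1) C

/-- An `S`–`T` chain: a separation chain whose first separation has second component
`V ∖ S` and whose last separation has first component `V ∖ T`. -/
def IsSTChain (E : V → V → Prop) (S T : Finset V) (C : List (Finset V × Finset V)) : Prop :=
  IsSepChain E C ∧ C.head?.map Prod.snd = some (Finset.univ \ S) ∧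
    C.getLast?.map Prod.fst = some (Finset.univ \ T)

/-- An `S`–`T` chain is tight if `A_0 = N⁺[S]` and `B_r = N⁻[T]`. -/
def Tight (E : V → V → Prop) [DecidableRel E] (S T : Finset V)
    (C : List (Finset V × Finset V)) : Prop :=
  C.head?.map Prod.fst = some (closedOut E S) ∧
    C.getLast?.map Prod.snd = some (closedIn E T)

/-- The order of a separation chain: the maximum order of its member separations. -/
def chainOrder (C : List (Finset V × Finset V)) : ℕ :=
  (C.map fun p => (p.1 ∩ p.2).card).foldr max 0

/-- The chain has order at most `k`. -/
def orderLE (C : List (Finset V × Finset V)) (k : ℕ) : Prop :=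
  ∀ p ∈ C, (p.1 ∩ p.2).card ≤ k

/-- A path decomposition of a digraph. -/
def IsPathDecomp {m : ℕ} (E : V → V → Prop) (X : Fin m → Finset V) : Prop :=
  (∀ v : V, ∃ i, v ∈ X i) ∧
  (∀ u v : V, E u v → ∃ i j : Fin m, j ≤ i ∧ u ∈ X i ∧ v ∈ X j) ∧
  (∀ (v : V) (i j k : Fin m), i ≤ j → j ≤ k → v ∈ X i → v ∈ X k → v ∈ X j)

/-- The width of a path decomposition: maximum bag size minus one. -/
def pdWidth {m : ℕ} (X : Fin m → Finset V) : ℕ :=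
  (Finset.univ.sup fun i => (X i).card) - 1

/-- The pathwidth of a digraph. -/
noncomputable def pathwidth (E : V → V → Prop) : ℕ :=
  sInf {k | ∃ (m : ℕ) (X : Fin m → Finset V), IsPathDecomp E X ∧ pdWidth X = k}

/-- An `h`-semicomplete digraph: every vertex has at most `h` non-neighbors. -/
def HSemicomplete (E : V → V → Prop) [DecidableRel E] (h : ℕ) : Prop :=
  ∀ v : V, (Finset.univ.filter fun u => u ≠ v ∧ ¬ E u v ∧ ¬ E v u).card ≤ h

/-- A semicomplete digraph: between any two distinct vertices there is an edge in
at least one direction. -/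
def Semicomplete (E : V → V → Prop) : Prop := ∀ u v : V, u ≠ v → E u v ∨ E v u

/-- A `k`-admissible pair `(S, T)`. -/
def kAdmissible (E : V → V → Prop) [DecidableRel E] (k : ℕ) (S T : Finset V) : Prop :=
  closedOut E S ∩ T = ∅ ∧ dOut E S ≤ k ∧ dIn E T ≤ k

/-- The potential `μ(S,T) = 2|V ∖ (N⁺[S] ∪ N⁻[T])| + |N⁺(S) Δ N⁻(T)|`. -/
def mu (E : V → V → Prop) [DecidableRel E] (S T : Finset V) : ℕ :=
  2 * (Finset.univ \ (closedOut E S ∪ closedIn E T)).card +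
    (symmDiff (openOut E S) (openIn E T)).card

/-- The wildness of a vertex. -/
def wld (E : V → V → Prop) [DecidableRel E] (v : V) : ℕ :=
  ((Finset.univ.filter fun u => dOutV E u ≤ dOutV E v) \ NoutV E v).card

/-- A `(d, l, k)`-degree tangle. -/
def IsDegTangle (E : V → V → Prop) [DecidableRel E] (d l k : ℕ) (T : Finset V) : Prop :=
  T.card = l ∧ ∀ v ∈ T, d ≤ dOutV E v ∧ dOutV E v ≤ d + k

/-- A `(d, l, k)`-matching tangle. -/
def IsMatchTangle (E : V → V → Prop) [DecidableRel E] (d l k : ℕ)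
    (T₁ T₂ : Finset V) : Prop :=
  T₁.card = l ∧ T₂.card = l ∧ (∀ v ∈ T₁, dOutV E v ≤ d) ∧
    (∀ v ∈ T₂, d + k + 1 ≤ dOutV E v) ∧
    ∃ φ : V → V, Set.BijOn φ ↑T₁ ↑T₂ ∧ ∀ v ∈ T₁, E v (φ v)

/-- A `(d, l, w)`-spider. -/
def IsSpider (E : V → V → Prop) [DecidableRel E] (d l w : ℕ) (T : Finset V)
    (L R : V → Finset V) : Prop :=
  l ≤ T.card ∧ ∀ v ∈ T,
    L v ⊆ NinV E v ∧ 3 * l ≤ (L v).card ∧ (∀ u ∈ L v, dOutV E u ≤ d) ∧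
    R v ⊆ NoutV E v ∧ 3 * l ≤ (R v).card ∧ (∀ u ∈ R v, d + w ≤ dOutV E u)

/-- Tameness of a left-side vertex of a `(d,l,w)`-spider:
`wld(u) ≤ 3l + d + w − d⁺(u) + 2·pw(G)`, stated additively. -/
def LeftTame (E : V → V → Prop) [DecidableRel E] (d l w : ℕ) (u : V) : Prop :=
  wld E u + dOutV E u ≤ 3 * l + d + w + 2 * pathwidth E

/-- Tameness of a right-side vertex of a `(d,l,w)`-spider:
`wld(u) ≤ 3l + d⁺(u) − d + 2·pw(G)`, stated additively. -/
def RightTame (E : V → V → Prop) [DecidableRel E] (d l w : ℕ) (u : V) : Prop :=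
  wld E u + d ≤ 3 * l + dOutV E u + 2 * pathwidth E

/-- A tame `(d, l, w)`-spider: each `L_v` and each `R_v` contains at least `2l`
tame vertices. -/
def IsTameSpider (E : V → V → Prop) [DecidableRel E] (d l w : ℕ) (T : Finset V)
    (L R : V → Finset V) : Prop :=
  IsSpider E d l w T L R ∧ ∀ v ∈ T,
    (∃ L' ⊆ L v, 2 * l ≤ L'.card ∧ ∀ u ∈ L', LeftTame E d l w u) ∧
    (∃ R' ⊆ R v, 2 * l ≤ R'.card ∧ ∀ u ∈ R', RightTame E d l w u)


/-!
Admissibility puts `N⁺(S)` inside the middle `M = V ∖ (S ∪ T)`. As `|N⁺(S)| ≤ k` and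
`|M| ≤ k + 1`, we can enlarge `N⁺(S)` inside `M` to a set `P` with `|P| ≤ k` that misses at most
one vertex of `M`. Then `(S ∪ P, V ∖ S), (V ∖ T, N⁻[T])` is an `S`–`T` chain of order at most `k`
whose only step adds `M ∖ P`, at most one vertex, to the first side.
-/

lemma _root_.Finset.exists_subsuperset_card_le_card_sdiff_le_one {α : Type*} [DecidableEq α]
    {X M : Finset α} {k : ℕ} (hXM : X ⊆ M) (hX : X.card ≤ k) (hM : M.card ≤ k + 1) :
    ∃ P, X ⊆ P ∧ P ⊆ M ∧ P.card ≤ k ∧ (M \ P).card ≤ 1 := by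
  obtain ⟨P, hXP, hPM, hP⟩ :=
    Finset.exists_subsuperset_card_eq hXM (le_min hX (Finset.card_le_card hXM))
      (min_le_right k M.card)
  refine ⟨P, hXP, hPM, hP ▸ min_le_left _ _, ?_⟩
  rw [Finset.card_sdiff_of_subset hPM, hP]
  omega

lemma mem_closedOut {E : V → V → Prop} [DecidableRel E] {U : Finset V} {v : V} :
    v ∈ closedOut E U ↔ v ∈ U ∨ ∃ u ∈ U, E u v := by
  simp only [closedOut, Finset.mem_biUnion, Finset.mem_insert, Finset.mem_filter,
    Finset.mem_univ, true_and]
  constructor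
  · rintro ⟨u, hu, rfl | h⟩
    exacts [Or.inl hu, Or.inr ⟨u, hu, h⟩]
  · rintro (h | ⟨u, hu, h⟩)
    exacts [⟨v, h, Or.inl rfl⟩, ⟨u, hu, Or.inr h⟩]

lemma mem_closedIn {E : V → V → Prop} [DecidableRel E] {U : Finset V} {v : V} :
    v ∈ closedIn E U ↔ v ∈ U ∨ ∃ u ∈ U, E v u := by
  simp only [closedIn, Finset.mem_biUnion, Finset.mem_insert, Finset.mem_filter,
    Finset.mem_univ, true_and]
  constructor
  · rintro ⟨u, hu, rfl | h⟩
    exacts [Or.inl hu, Or.inr ⟨u, hu, h⟩]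
  · rintro (h | ⟨u, hu, h⟩)
    exacts [⟨v, h, Or.inl rfl⟩, ⟨u, hu, Or.inr h⟩]

lemma subset_closedOut (E : V → V → Prop) [DecidableRel E] (U : Finset V) :
    U ⊆ closedOut E U :=
  fun _ hv => mem_closedOut.2 (Or.inl hv)

lemma subset_closedIn (E : V → V → Prop) [DecidableRel E] (U : Finset V) :
    U ⊆ closedIn E U :=
  fun _ hv => mem_closedIn.2 (Or.inl hv)

lemma disjoint_closedOut_iff_disjoint_closedIn (E : V → V → Prop) [DecidableRel E]
    (S T : Finset V) : Disjoint (closedOut E S) T ↔ Disjoint S (closedIn E T) := by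
  simp only [Finset.disjoint_left, mem_closedOut, mem_closedIn]
  constructor
  · rintro h s hs (hsT | ⟨t, ht, hst⟩)
    exacts [h (Or.inl hs) hsT, h (Or.inr ⟨s, hs, hst⟩) ht]
  · rintro h v (hvS | ⟨s, hs, hsv⟩) hvT
    exacts [h hvS (Or.inl hvT), h hs (Or.inr ⟨v, hvT, hsv⟩)]

lemma isSep_sdiff_of_closedOut_subset {E : V → V → Prop} [DecidableRel E] {S A : Finset V}
    (h : closedOut E S ⊆ A) : IsSep E A (Finset.univ \ S) := by
  refine ⟨?_, fun a _ ha b _ hb hab => hb (h (mem_closedOut.2 (Or.inr ⟨a, ?_, hab⟩)))⟩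
  · refine Finset.eq_univ_iff_forall.2 fun v => ?_
    by_cases hv : v ∈ S
    · exact Finset.mem_union_left _ (h (subset_closedOut E S hv))
    · simp [hv]
  · simpa using ha

lemma isSep_sdiff_of_closedIn_subset {E : V → V → Prop} [DecidableRel E] {T B : Finset V}
    (h : closedIn E T ⊆ B) : IsSep E (Finset.univ \ T) B := by
  refine ⟨?_, fun a _ ha b _ hb hab => ha (h (mem_closedIn.2 (Or.inr ⟨b, ?_, hab⟩)))⟩
  · refine Finset.eq_univ_iff_forall.2 fun v => ?_
    by_cases hv : v ∈ T
    · exact Finset.mem_union_right _ (h (subset_closedIn E T hv))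
    · simp [hv]
  · simpa using hb

lemma closedOut_subset_union {E : V → V → Prop} [DecidableRel E] {S P : Finset V}
    (h : openOut E S ⊆ P) : closedOut E S ⊆ S ∪ P :=
  fun v hv => Finset.mem_union.2 <|
    (em (v ∈ S)).imp id fun hvS => h (Finset.mem_sdiff.2 ⟨hv, hvS⟩)

lemma openOut_subset_compl_union {E : V → V → Prop} [DecidableRel E] {S T : Finset V}
    (h : Disjoint (closedOut E S) T) : openOut E S ⊆ Finset.univ \ (S ∪ T) := fun v hv => by
  obtain ⟨hvN, hvS⟩ := Finset.mem_sdiff.1 hv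
  simpa [hvS] using Finset.disjoint_left.1 h hvN

lemma sdiff_inter_closedIn (E : V → V → Prop) [DecidableRel E] (T : Finset V) :
    (Finset.univ \ T) ∩ closedIn E T = openIn E T := by
  ext v
  simp only [Finset.mem_inter, Finset.mem_sdiff, Finset.mem_univ, true_and, openIn]
  tauto

lemma isSTChain_pair {E : V → V → Prop} [DecidableRel E] {S T A : Finset V}
    (hSA : closedOut E S ⊆ A) (hAT : Disjoint A T) (hSB : Disjoint S (closedIn E T)) :
    IsSTChain E S T [(A, Finset.univ \ S), (Finset.univ \ T, closedIn E T)] := by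
  refine ⟨⟨?_, List.isChain_pair.2 ⟨fun v hv => ?_, fun v hv => ?_⟩⟩, rfl, rfl⟩
  · intro p hp
    simp only [List.mem_cons, List.not_mem_nil, or_false] at hp
    rcases hp with rfl | rfl
    exacts [isSep_sdiff_of_closedOut_subset hSA, isSep_sdiff_of_closedIn_subset subset_rfl]
  · simpa using Finset.disjoint_left.1 hAT hv
  · simpa using Finset.disjoint_right.1 hSB hv

theorem gapless_chain_of_small_middle_general (E : V → V → Prop) [DecidableRel E]
    (k : ℕ) (S T : Finset V)
    (hadm : kAdmissible E k S T)
    (hsmall : (Finset.univ \ (S ∪ T)).card ≤ k + 1) :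
    ∃ C : List (Finset V × Finset V), IsSTChain E S T C ∧ Gapless C ∧ orderLE C k := by
  obtain ⟨hdisj, hout, hin⟩ := hadm
  rw [← Finset.disjoint_iff_inter_eq_empty] at hdisj
  obtain ⟨P, hSP, hPM, hPk, hMP⟩ :=
    Finset.exists_subsuperset_card_le_card_sdiff_le_one (openOut_subset_compl_union hdisj) hout
      hsmall
  have hST : Disjoint S T := Finset.disjoint_of_subset_left (subset_closedOut E S) hdisj
  have hPT : Disjoint P T := Finset.sdiff_disjoint.mono hPM Finset.subset_union_right
  refine ⟨_, isSTChain_pair (closedOut_subset_union hSP) (Finset.disjoint_union_left.2 ⟨hST, hPT⟩)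
    ((disjoint_closedOut_iff_disjoint_closedIn E S T).1 hdisj), ?_, ?_⟩
  · refine List.isChain_pair.2 (Or.inl (le_trans (Finset.card_le_card fun v hv => ?_) hMP))
    simp_all
  · intro p hp
    simp only [List.mem_cons, List.not_mem_nil, or_false] at hp
    rcases hp with rfl | rfl
    · refine le_trans (Finset.card_le_card fun v hv => ?_) hPk
      simp only [Finset.mem_inter, Finset.mem_union, Finset.mem_sdiff, Finset.mem_univ,
        true_and] at hv
      tauto
    · rwa [sdiff_inter_closedIn]

/-- If `(S,T)` is `k`-admissible and `|V ∖ (S ∪ T)| ≤ k + 1`, then `G` has a gapless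
`S`–`T` chain of order at most `k`. -/
theorem gapless_chain_of_small_middle (E : V → V → Prop) [DecidableRel E]
    (hirr : Irreflexive E) (k : ℕ) (hk : 0 < k) (S T : Finset V)
    (hadm : kAdmissible E k S T)
    (hsmall : (Finset.univ \ (S ∪ T)).card ≤ k + 1) :
    ∃ C : List (Finset V × Finset V), IsSTChain E S T C ∧ Gapless C ∧ orderLE C k :=
  gapless_chain_of_small_middle_general E k S T hadm hsmall

end AlmostSemicomplete
end

section
/- Let G be a digraph, S and T disjoint vertex sets, and suppose G has a gapless S–T separation chain of order k. Let (X,Y) be a minimum S–T separation of G. Then G has a gapless S–T chain of order at most k of the form C₁ + (X,Y) + C₂, where C₁ is a gapless S–(Y∖X) chain and C₂ is a gapless (X∖Y)–T chain (here + denotes concatenation of separation chains). -/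
namespace AlmostSemicomplete

variable {V : Type} [Fintype V] [DecidableEq V]

/-! Map the given chain `(Aᵢ, Bᵢ)` through the two corners with `(X, Y)`, giving
`C₁ = (Aᵢ ∩ X, Bᵢ ∪ Y)` and `C₂ = (Aᵢ ∪ X, Bᵢ ∩ Y)`. Both maps preserve monotonicity and
gaplessness, `C₁` ends with first component `X` and `C₂` starts with second component `Y`, so
`C₁ + (X, Y) + C₂` is again gapless. By submodularity the two corners of `(Aᵢ, Bᵢ)` have total
order at most `|Aᵢ ∩ Bᵢ| + |X ∩ Y|`; both are `S`–`T` separations, so minimality of `(X, Y)`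
bounds each of them by `|Aᵢ ∩ Bᵢ| ≤ k`. -/

open Finset

section

variable {E : V → V → Prop}

theorem isSep_iff {A B : Finset V} :
    IsSep E A B ↔ A ∪ B = univ ∧ ∀ a b, a ∉ B → b ∉ A → ¬ E a b := by
  refine and_congr_right fun hAB => ?_
  have hmem : ∀ v, v ∈ A ∨ v ∈ B := fun v => mem_union.mp (hAB ▸ mem_univ v)
  exact ⟨fun h a b ha hb => h a ((hmem a).resolve_right ha) ha b ((hmem b).resolve_left hb) hb,
    fun h a _ ha b _ hb => h a b ha hb⟩

theorem IsSep.swap {A B : Finset V} (h : IsSep E A B) : IsSep (flip E) B A := by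
  rw [isSep_iff] at h ⊢
  exact ⟨union_comm B A ▸ h.1, fun b a hb ha => h.2 a b ha hb⟩

theorem IsSep.univ_sdiff_sdiff {X Y : Finset V} (h : IsSep E X Y) : univ \ (Y \ X) = X := by
  ext v
  have := mem_union.mp (h.1 ▸ mem_univ v)
  simp only [mem_sdiff, mem_univ, true_and, not_and, not_not]
  tauto

theorem IsSep.inter_union {A B X Y : Finset V} (hAB : IsSep E A B) (hXY : IsSep E X Y) :
    IsSep E (A ∩ X) (B ∪ Y) := by
  rw [isSep_iff] at *
  refine ⟨eq_univ_iff_forall.mpr fun v => ?_, fun a b ha hb => ?_⟩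
  · have hA := mem_union.mp (hAB.1 ▸ mem_univ v)
    have hX := mem_union.mp (hXY.1 ▸ mem_univ v)
    simp only [mem_union, mem_inter]
    tauto
  · simp only [mem_union, mem_inter, not_or, not_and_or] at ha hb
    rcases hb with hb | hb
    exacts [hAB.2 a b ha.1 hb, hXY.2 a b ha.2 hb]

theorem IsSep.union_inter {A B X Y : Finset V} (hAB : IsSep E A B) (hXY : IsSep E X Y) :
    IsSep E (A ∪ X) (B ∩ Y) :=
  (hAB.swap.inter_union hXY.swap).swap

theorem IsSTSep.swap {S T A B : Finset V} (h : IsSTSep E S T A B) :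
    IsSTSep (flip E) T S B A :=
  ⟨h.1.swap, h.2.2, h.2.1⟩

theorem IsSTSep.inter_union {S T A B X Y : Finset V} (hAB : IsSTSep E S T A B)
    (hXY : IsSTSep E S T X Y) : IsSTSep E S T (A ∩ X) (B ∪ Y) :=
  ⟨hAB.1.inter_union hXY.1, by rw [inter_union_distrib_left, hAB.2.1, hXY.2.1, union_empty],
    by rw [← inter_assoc, hAB.2.2, empty_inter]⟩

theorem IsSTSep.union_inter {S T A B X Y : Finset V} (hAB : IsSTSep E S T A B)
    (hXY : IsSTSep E S T X Y) : IsSTSep E S T (A ∪ X) (B ∩ Y) :=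
  (hAB.swap.inter_union hXY.swap).swap

theorem card_inter_union_add_card_union_inter_le {α : Type*} [DecidableEq α]
    (A B X Y : Finset α) :
    (A ∩ X ∩ (B ∪ Y)).card + ((A ∪ X) ∩ (B ∩ Y)).card ≤ (A ∩ B).card + (X ∩ Y).card := by
  have hunion : A ∩ X ∩ (B ∪ Y) ∪ (A ∪ X) ∩ (B ∩ Y) ⊆ A ∩ B ∪ X ∩ Y := by
    intro v; simp only [mem_union, mem_inter]; tauto
  have hinter : A ∩ X ∩ (B ∪ Y) ∩ ((A ∪ X) ∩ (B ∩ Y)) ⊆ A ∩ B ∩ (X ∩ Y) := by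
    intro v; simp only [mem_union, mem_inter]; tauto
  calc (A ∩ X ∩ (B ∪ Y)).card + ((A ∪ X) ∩ (B ∩ Y)).card
      = (A ∩ X ∩ (B ∪ Y) ∪ (A ∪ X) ∩ (B ∩ Y)).card
        + (A ∩ X ∩ (B ∪ Y) ∩ ((A ∪ X) ∩ (B ∩ Y))).card := (card_union_add_card_inter _ _).symm
    _ ≤ (A ∩ B ∪ X ∩ Y).card + (A ∩ B ∩ (X ∩ Y)).card :=
        add_le_add (card_le_card hunion) (card_le_card hinter)
    _ = (A ∩ B).card + (X ∩ Y).card := card_union_add_card_inter _ _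

theorem IsMinSTSep.card_inter_union_le {S T A B X Y : Finset V} (hmin : IsMinSTSep E S T X Y)
    (hAB : IsSTSep E S T A B) : (A ∩ X ∩ (B ∪ Y)).card ≤ (A ∩ B).card := by
  have := hmin.2 _ _ (hAB.union_inter hmin.1)
  have := card_inter_union_add_card_union_inter_le A B X Y
  omega

theorem IsMinSTSep.card_union_inter_le {S T A B X Y : Finset V} (hmin : IsMinSTSep E S T X Y)
    (hAB : IsSTSep E S T A B) : ((A ∪ X) ∩ (B ∩ Y)).card ≤ (A ∩ B).card := by
  have := hmin.2 _ _ (hAB.inter_union hmin.1)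
  have := card_inter_union_add_card_union_inter_le A B X Y
  omega

theorem IsSepChain.map_inter_union {C : List (Finset V × Finset V)} {X Y : Finset V}
    (hC : IsSepChain E C) (hXY : IsSep E X Y) :
    IsSepChain E (C.map fun p => (p.1 ∩ X, p.2 ∪ Y)) :=
  ⟨List.forall_mem_map.mpr fun p hp => (hC.1 p hp).inter_union hXY,
    (List.isChain_map _).mpr <| hC.2.imp fun _ _ h =>
      ⟨inter_subset_inter h.1 subset_rfl, union_subset_union h.2 subset_rfl⟩⟩

theorem IsSepChain.map_union_inter {C : List (Finset V × Finset V)} {X Y : Finset V}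
    (hC : IsSepChain E C) (hXY : IsSep E X Y) :
    IsSepChain E (C.map fun p => (p.1 ∪ X, p.2 ∩ Y)) :=
  ⟨List.forall_mem_map.mpr fun p hp => (hC.1 p hp).union_inter hXY,
    (List.isChain_map _).mpr <| hC.2.imp fun _ _ h =>
      ⟨union_subset_union h.1 subset_rfl, inter_subset_inter h.2 subset_rfl⟩⟩

end

section

variable {α : Type} [DecidableEq α]

theorem Gapless.map_inter_union {C : List (Finset α × Finset α)} (hC : Gapless C)
    (X Y : Finset α) : Gapless (C.map fun p => (p.1 ∩ X, p.2 ∪ Y)) :=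
  (List.isChain_map _).mpr <| hC.imp fun _ _ h => h.imp
    (le_trans <| card_le_card fun v => by simp only [mem_sdiff, mem_inter]; tauto)
    (le_trans <| card_le_card fun v => by simp only [mem_sdiff, mem_union]; tauto)

theorem Gapless.map_union_inter {C : List (Finset α × Finset α)} (hC : Gapless C)
    (X Y : Finset α) : Gapless (C.map fun p => (p.1 ∪ X, p.2 ∩ Y)) :=
  (List.isChain_map _).mpr <| hC.imp fun _ _ h => h.imp
    (le_trans <| card_le_card fun v => by simp only [mem_sdiff, mem_union]; tauto)
    (le_trans <| card_le_card fun v => by simp only [mem_sdiff, mem_inter]; tauto)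

theorem Gapless.append_cons {C₁ C₂ : List (Finset α × Finset α)} {X Y : Finset α}
    (h₁ : Gapless C₁) (h₂ : Gapless C₂) (hlast : ∀ p ∈ C₁.getLast?, p.1 = X)
    (hhead : ∀ q ∈ C₂.head?, q.2 = Y) : Gapless (C₁ ++ (X, Y) :: C₂) := by
  refine List.isChain_append.mpr ⟨h₁, List.isChain_cons.mpr ⟨fun q hq => Or.inr ?_, h₂⟩,
    fun p hp q hq => Or.inl ?_⟩
  · simp [hhead q hq]
  · simp only [List.head?_cons, Option.mem_def, Option.some_inj] at hq
    simp [← hq, hlast p hp]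

theorem card_inter_le_chainOrder {C : List (Finset α × Finset α)} {p : Finset α × Finset α}
    (hp : p ∈ C) : (p.1 ∩ p.2).card ≤ chainOrder C := by
  induction C with
  | nil => simp at hp
  | cons q C ih =>
    rcases List.mem_cons.mp hp with rfl | hp
    exacts [le_max_left _ _, (ih hp).trans (le_max_right _ _)]

end

section

variable {E : V → V → Prop} {S T X Y : Finset V}

theorem IsSTSep.snd_subset_univ_sdiff {A B : Finset V} (h : IsSTSep E S T A B) : B ⊆ univ \ S :=
  subset_sdiff.mpr ⟨subset_univ B, disjoint_iff_inter_eq_empty.mpr (inter_comm B S ▸ h.2.1)⟩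

theorem IsSTSep.fst_subset_univ_sdiff {A B : Finset V} (h : IsSTSep E S T A B) : A ⊆ univ \ T :=
  h.swap.snd_subset_univ_sdiff

variable {C C₁ C₂ : List (Finset V × Finset V)}

theorem IsSTChain.ne_nil (h : IsSTChain E S T C) : C ≠ [] := by
  rintro rfl
  simp [IsSTChain] at h

theorem IsSTChain.snd_of_mem_head? (h : IsSTChain E S T C) {p : Finset V × Finset V}
    (hp : p ∈ C.head?) : p.2 = univ \ S := by
  simpa [Option.mem_def.mp hp] using h.2.1

theorem IsSTChain.fst_of_mem_getLast? (h : IsSTChain E S T C) {p : Finset V × Finset V}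
    (hp : p ∈ C.getLast?) : p.1 = univ \ T := by
  simpa [Option.mem_def.mp hp] using h.2.2

theorem IsSTChain.isSTSep_of_mem (h : IsSTChain E S T C) {p : Finset V × Finset V}
    (hp : p ∈ C) : IsSTSep E S T p.1 p.2 := by
  refine ⟨h.1.1 p hp, ?_, ?_⟩
  · refine h.1.2.induction (fun q => S ∩ q.2 = ∅) C
      (fun _ _ hxy hx => subset_empty.mp (hx ▸ inter_subset_inter subset_rfl hxy.2))
      (fun hne => ?_) p hp
    rw [h.snd_of_mem_head? (List.head_mem_head? hne), inter_sdiff_self]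
  · refine h.1.2.backwards_induction (fun q => T ∩ q.1 = ∅) C
      (fun _ _ hxy hy => subset_empty.mp (hy ▸ inter_subset_inter subset_rfl hxy.1))
      (fun hne => ?_) p hp
    rw [h.fst_of_mem_getLast? (List.getLast_mem_getLast? hne), inter_sdiff_self]

theorem IsSTChain.map_inter_union (h : IsSTChain E S T C) (hXY : IsSTSep E S T X Y) :
    IsSTChain E S (Y \ X) (C.map fun p => (p.1 ∩ X, p.2 ∪ Y)) := by
  have hp := List.head_mem_head? h.ne_nil
  have hq := List.getLast_mem_getLast? h.ne_nil
  refine ⟨h.1.map_inter_union hXY.1, ?_, ?_⟩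
  · simp [List.head?_map, Option.mem_def.mp hp, h.snd_of_mem_head? hp, hXY.snd_subset_univ_sdiff]
  · simp [List.getLast?_map, Option.mem_def.mp hq, h.fst_of_mem_getLast? hq, hXY.fst_subset_univ_sdiff,
      hXY.1.univ_sdiff_sdiff]

theorem IsSTChain.map_union_inter (h : IsSTChain E S T C) (hXY : IsSTSep E S T X Y) :
    IsSTChain E (X \ Y) T (C.map fun p => (p.1 ∪ X, p.2 ∩ Y)) := by
  have hp := List.head_mem_head? h.ne_nil
  have hq := List.getLast_mem_getLast? h.ne_nil
  refine ⟨h.1.map_union_inter hXY.1, ?_, ?_⟩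
  · simp [List.head?_map, Option.mem_def.mp hp, h.snd_of_mem_head? hp, hXY.snd_subset_univ_sdiff,
      hXY.1.swap.univ_sdiff_sdiff]
  · simp [List.getLast?_map, Option.mem_def.mp hq, h.fst_of_mem_getLast? hq, hXY.fst_subset_univ_sdiff]

theorem IsSTChain.append_cons (h₁ : IsSTChain E S (Y \ X) C₁) (h₂ : IsSTChain E (X \ Y) T C₂)
    (hXY : IsSep E X Y) (hY : ∀ p ∈ C₁, Y ⊆ p.2) (hX : ∀ q ∈ C₂, X ⊆ q.1) :
    IsSTChain E S T (C₁ ++ (X, Y) :: C₂) := by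
  refine ⟨⟨fun p hp => ?_, List.isChain_append.mpr ⟨h₁.1.2, ?_, fun p hp q hq => ?_⟩⟩, ?_, ?_⟩
  · rcases List.mem_append.mp hp with hp | hp
    · exact h₁.1.1 p hp
    · rcases List.mem_cons.mp hp with rfl | hp
      exacts [hXY, h₂.1.1 p hp]
  · refine List.isChain_cons.mpr ⟨fun q hq => ⟨hX q (List.mem_of_mem_head? hq), ?_⟩, h₂.1.2⟩
    rw [h₂.snd_of_mem_head? hq, hXY.swap.univ_sdiff_sdiff]
  · simp only [List.head?_cons, Option.mem_def, Option.some_inj] at hq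
    subst hq
    exact ⟨((h₁.fst_of_mem_getLast? hp).trans hXY.univ_sdiff_sdiff).subset,
      hY p (List.mem_of_getLast? hp)⟩
  · rw [List.head?_append_of_ne_nil _ h₁.ne_nil]
    exact h₁.2.1
  · rw [← List.singleton_append, ← List.append_assoc,
      List.getLast?_append_of_ne_nil _ h₂.ne_nil]
    exact h₂.2.2

theorem IsMinSTSep.orderLE_append_cons (hmin : IsMinSTSep E S T X Y) (h : IsSTChain E S T C) :
    orderLE (C.map (fun p => (p.1 ∩ X, p.2 ∪ Y)) ++ (X, Y) :: C.map fun p => (p.1 ∪ X, p.2 ∩ Y))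
      (chainOrder C) := by
  simp only [orderLE, List.mem_append, List.mem_cons, List.mem_map]
  rintro _ (⟨p, hp, rfl⟩ | rfl | ⟨p, hp, rfl⟩)
  · exact (hmin.card_inter_union_le (h.isSTSep_of_mem hp)).trans (card_inter_le_chainOrder hp)
  · obtain ⟨p, hp⟩ := List.exists_mem_of_ne_nil _ h.ne_nil
    exact (hmin.2 _ _ (h.isSTSep_of_mem hp)).trans (card_inter_le_chainOrder hp)
  · exact (hmin.card_union_inter_le (h.isSTSep_of_mem hp)).trans (card_inter_le_chainOrder hp)

end

theorem divide_through_min_separation_general (E : V → V → Prop)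
    (S T : Finset V) (k : ℕ)
    (C : List (Finset V × Finset V))
    (hC : IsSTChain E S T C ∧ Gapless C ∧ chainOrder C = k)
    (X Y : Finset V) (hmin : IsMinSTSep E S T X Y) :
    ∃ C₁ C₂ : List (Finset V × Finset V),
      IsSTChain E S (Y \ X) C₁ ∧ Gapless C₁ ∧
      IsSTChain E (X \ Y) T C₂ ∧ Gapless C₂ ∧
      IsSTChain E S T (C₁ ++ (X, Y) :: C₂) ∧ Gapless (C₁ ++ (X, Y) :: C₂) ∧
      orderLE (C₁ ++ (X, Y) :: C₂) k := by
  obtain ⟨hC, hgap, rfl⟩ := hC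
  have hXY := hmin.1
  have h₁ := hC.map_inter_union hXY
  have h₂ := hC.map_union_inter hXY
  refine ⟨_, _, h₁, hgap.map_inter_union X Y, h₂, hgap.map_union_inter X Y,
    h₁.append_cons h₂ hXY.1 (List.forall_mem_map.mpr fun _ _ => subset_union_right)
      (List.forall_mem_map.mpr fun _ _ => subset_union_right),
    (hgap.map_inter_union X Y).append_cons (hgap.map_union_inter X Y) ?_ ?_,
    hmin.orderLE_append_cons hC⟩
  · exact fun p hp => (h₁.fst_of_mem_getLast? hp).trans hXY.1.univ_sdiff_sdiff
  · exact fun q hq => (h₂.snd_of_mem_head? hq).trans hXY.1.swap.univ_sdiff_sdiff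

/-- divide-and-conquer recurrence: a gapless `S`–`T` chain of order `k` can be split
through any minimum `S`–`T` separation `(X,Y)`. -/
theorem divide_through_min_separation (E : V → V → Prop) (hirr : Irreflexive E)
    (S T : Finset V) (hST : Disjoint S T) (k : ℕ)
    (C : List (Finset V × Finset V))
    (hC : IsSTChain E S T C ∧ Gapless C ∧ chainOrder C = k)
    (X Y : Finset V) (hmin : IsMinSTSep E S T X Y) :
    ∃ C₁ C₂ : List (Finset V × Finset V),
      IsSTChain E S (Y \ X) C₁ ∧ Gapless C₁ ∧
      IsSTChain E (X \ Y) T C₂ ∧ Gapless C₂ ∧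
      IsSTChain E S T (C₁ ++ (X, Y) :: C₂) ∧ Gapless (C₁ ++ (X, Y) :: C₂) ∧
      orderLE (C₁ ++ (X, Y) :: C₂) k :=
  divide_through_min_separation_general E S T k C hC X Y hmin

end AlmostSemicomplete
end

section
/- Let G be a digraph and S, T disjoint vertex sets. If G has a gapless S–T separation chain of order at most k, then G has a gapless S–T separation chain of order at most k that is both tight and nice. -/
/-!
A step `(A, B) ≤ (A', B')` of a gapless chain with `|A' ∖ A| ≤ 1` is refined by first moving to
`(A', B ∖ {v})` for some `v ∈ B ∖ B'` and then deleting the remaining vertices of `B ∖ B'` from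
the right side one at a time. Enlarging either side of a separation gives a separation, so all
these pairs are separations, and since every deleted vertex lies in `A'` their orders are at
most `|A' ∩ B| - 1 ≤ |A ∩ B|`. Steps with `|B ∖ B'| ≤ 1` are the same after reversing all edges
and swapping the sides. Tightness comes from putting `(N⁺[S], V ∖ S)` in front of the chain and
`(V ∖ T, N⁻[T])` behind it: their orders are bounded by those of the first and last separation.
-/

namespace AlmostSemicomplete

variable {V : Type} [Fintype V] [DecidableEq V]

open Finset Function Relation

variable {E : V → V → Prop} {k : ℕ}

theorem IsSep.mem_left_of_notMem_right {A B : Finset V} (h : IsSep E A B) {x : V} (hx : x ∉ B) :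
    x ∈ A :=
  (mem_union.1 (h.1 ▸ mem_univ x)).resolve_right hx

theorem IsSep.mono_left {A A' B : Finset V} (h : IsSep E A B) (hA : A ⊆ A') : IsSep E A' B :=
  ⟨univ_subset_iff.1 (h.1 ▸ union_subset_union hA subset_rfl),
    fun a _ haB b hb hbA => h.2 a (h.mem_left_of_notMem_right haB) haB b hb fun hb' => hbA (hA hb')⟩

theorem isSep_swap_iff {A B : Finset V} : IsSep (swap E) B A ↔ IsSep E A B := by
  rw [IsSep, IsSep, union_comm]
  exact and_congr_right fun _ =>
    ⟨fun h a ha haB b hb hbA => h b hb hbA a ha haB, fun h b hb hbA a ha haB => h a ha haB b hb hbA⟩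

theorem IsSep.mono_right {A B B' : Finset V} (h : IsSep E A B) (hB : B ⊆ B') : IsSep E A B' :=
  isSep_swap_iff.1 ((isSep_swap_iff.2 h).mono_left hB)

def IsSepOfOrderLE (E : V → V → Prop) (k : ℕ) (p : Finset V × Finset V) : Prop :=
  IsSep E p.1 p.2 ∧ (p.1 ∩ p.2).card ≤ k

/-- Both endpoints are required to be separations of order at most `k`, so that the relation is
invariant under reversing the digraph and swapping the sides. -/
def NiceStep (E : V → V → Prop) (k : ℕ) (p q : Finset V × Finset V) : Prop :=
  IsSepOfOrderLE E k p ∧ IsSepOfOrderLE E k q ∧ (p.1 ⊆ q.1 ∧ q.2 ⊆ p.2) ∧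
    (q.1 \ p.1).card ≤ 1 ∧ (p.2 \ q.2).card ≤ 1

theorem isSepOfOrderLE_swap_iff {p : Finset V × Finset V} :
    IsSepOfOrderLE (swap E) k p.swap ↔ IsSepOfOrderLE E k p := by
  rw [IsSepOfOrderLE, IsSepOfOrderLE, Prod.fst_swap, Prod.snd_swap, isSep_swap_iff, inter_comm]

theorem niceStep_swap_iff {p q : Finset V × Finset V} :
    NiceStep (swap E) k q.swap p.swap ↔ NiceStep E k p q := by
  simp only [NiceStep, isSepOfOrderLE_swap_iff, Prod.fst_swap, Prod.snd_swap]
  tauto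

theorem reflTransGen_niceStep_of_swap {p q : Finset V × Finset V}
    (h : ReflTransGen (NiceStep (swap E) k) q.swap p.swap) : ReflTransGen (NiceStep E k) p q := by
  rw [← reflTransGen_swap]
  simpa only [onFun, Prod.swap_swap] using h.lift Prod.swap fun a b hab =>
    niceStep_swap_iff (p := b.swap) (q := a.swap) |>.1 (by simpa using hab)

theorem reflTransGen_niceStep_of_card_sdiff_fst_le_one {A₀ A B B' : Finset V}
    (hp : IsSepOfOrderLE E k (A₀, B)) (hq : IsSepOfOrderLE E k (A, B')) (hA : A₀ ⊆ A)
    (hB : B' ⊆ B) (hA₁ : (A \ A₀).card ≤ 1) : ReflTransGen (NiceStep E k) (A₀, B) (A, B') := by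
  induction hn : (B \ B').card using Nat.strong_induction_on generalizing A₀ B with
  | _ n ih =>
  by_cases hB₁ : (B \ B').card ≤ 1
  · exact .single ⟨hp, hq, ⟨hA, hB⟩, hA₁, hB₁⟩
  obtain ⟨v, hv⟩ : (B \ B').Nonempty := card_pos.1 (by omega)
  obtain ⟨hvB, hvB'⟩ := mem_sdiff.1 hv
  have hBv : B' ⊆ B.erase v := subset_erase.2 ⟨hB, hvB'⟩
  have hAB : (A ∩ B).card ≤ (A₀ ∩ B).card + (A \ A₀).card :=
    (card_le_card fun x => by simp only [mem_inter, mem_union, mem_sdiff]; tauto).trans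
      (card_union_le _ _)
  have hm : IsSepOfOrderLE E k (A, B.erase v) := by
    refine ⟨hq.1.mono_right hBv, ?_⟩
    rw [inter_erase, card_erase_of_mem (mem_inter.2 ⟨hq.1.mem_left_of_notMem_right hvB', hvB⟩)]
    have hA₀B : (A₀ ∩ B).card ≤ k := hp.2
    dsimp only
    omega
  refine .head ⟨hp, hm, ⟨hA, erase_subset v B⟩, hA₁, by rw [sdiff_erase_self hvB, card_singleton]⟩
    ?_
  refine ih _ ?_ hm subset_rfl hBv (by simp) rfl
  rw [← hn, erase_sdiff_comm, card_erase_of_mem hv]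
  omega

theorem reflTransGen_niceStep_of_card_sdiff_snd_le_one {A A' B B₀ : Finset V}
    (hp : IsSepOfOrderLE E k (A, B)) (hq : IsSepOfOrderLE E k (A', B₀)) (hA : A ⊆ A')
    (hB : B₀ ⊆ B) (hB₁ : (B \ B₀).card ≤ 1) : ReflTransGen (NiceStep E k) (A, B) (A', B₀) :=
  reflTransGen_niceStep_of_swap <| reflTransGen_niceStep_of_card_sdiff_fst_le_one
    (isSepOfOrderLE_swap_iff.2 hq) (isSepOfOrderLE_swap_iff.2 hp) hB hA hB₁

theorem reflTransGen_niceStep_of_gapless {p q : Finset V × Finset V} (hp : IsSepOfOrderLE E k p)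
    (hq : IsSepOfOrderLE E k q) (hpq : p.1 ⊆ q.1 ∧ q.2 ⊆ p.2)
    (hgap : (q.1 \ p.1).card ≤ 1 ∨ (p.2 \ q.2).card ≤ 1) : ReflTransGen (NiceStep E k) p q := by
  rcases hgap with h | h
  · exact reflTransGen_niceStep_of_card_sdiff_fst_le_one hp hq hpq.1 hpq.2 h
  · exact reflTransGen_niceStep_of_card_sdiff_snd_le_one hp hq hpq.1 hpq.2 h

theorem reflTransGen_niceStep_of_isSepChain {c : Finset V × Finset V}
    {l : List (Finset V × Finset V)} (hC : IsSepChain E (c :: l)) (hgap : Gapless (c :: l))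
    (hord : orderLE (c :: l) k) :
    ReflTransGen (NiceStep E k) c ((c :: l).getLast (List.cons_ne_nil c l)) := by
  have hstep : (c :: l).IsChain fun p q => p ∈ c :: l ∧ q ∈ c :: l ∧
      (p.1 ⊆ q.1 ∧ q.2 ⊆ p.2) ∧ ((q.1 \ p.1).card ≤ 1 ∨ (p.2 \ q.2).card ≤ 1) := by
    have hmono : List.IsChain _ (c :: l) := hC.2
    have hgap : List.IsChain _ (c :: l) := hgap
    rw [List.isChain_iff_getElem] at hmono hgap ⊢
    exact fun i hi => ⟨List.getElem_mem _, List.getElem_mem _, hmono i hi, hgap i hi⟩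
  exact (List.relationReflTransGen_of_exists_isChain_cons l hstep rfl).lift' id
    fun p q ⟨hp, hq, hpq, hpq₁⟩ =>
      reflTransGen_niceStep_of_gapless ⟨hC.1 p hp, hord p hp⟩ ⟨hC.1 q hq, hord q hq⟩ hpq hpq₁

section Neighborhoods

variable [DecidableRel E]

theorem mem_closedOut_s4 {S : Finset V} {b : V} : b ∈ closedOut E S ↔ ∃ s ∈ S, b = s ∨ E s b := by
  simp [closedOut]

theorem isSep_closedOut (S : Finset V) : IsSep E (closedOut E S) (univ \ S) := by
  refine ⟨eq_univ_of_forall fun x => ?_, fun a ha haS b _ hb hab => ?_⟩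
  · by_cases hx : x ∈ S
    · exact mem_union_left _ (mem_closedOut_s4.2 ⟨x, hx, .inl rfl⟩)
    · exact mem_union_right _ (by simpa using hx)
  · exact hb (mem_closedOut_s4.2 ⟨a, by simpa using haS, .inr hab⟩)

theorem IsSep.closedOut_subset {A S : Finset V} (h : IsSep E A (univ \ S)) :
    closedOut E S ⊆ A := by
  have hS : ∀ s ∈ S, s ∈ A := fun s hs => h.mem_left_of_notMem_right (by simpa using hs)
  intro b hb
  obtain ⟨s, hs, rfl | hsb⟩ := mem_closedOut_s4.1 hb
  · exact hS _ hs
  · by_contra hbA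
    have hbS : b ∈ univ \ S := (isSep_swap_iff.2 h).mem_left_of_notMem_right hbA
    exact h.2 s (hS s hs) (by simpa using hs) b hbS hbA hsb

theorem IsSepOfOrderLE.closedOut {p : Finset V × Finset V} {S : Finset V}
    (hp : IsSepOfOrderLE E k p) (hS : p.2 = univ \ S) :
    IsSepOfOrderLE E k (closedOut E S, univ \ S) := by
  obtain ⟨A, B⟩ := p
  subst hS
  exact ⟨isSep_closedOut S,
    (card_le_card (inter_subset_inter_right hp.1.closedOut_subset)).trans hp.2⟩

theorem reflTransGen_niceStep_closedOut {p : Finset V × Finset V} {S : Finset V}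
    (hp : IsSepOfOrderLE E k p) (hS : p.2 = univ \ S) :
    ReflTransGen (NiceStep E k) (closedOut E S, univ \ S) p := by
  obtain ⟨A, B⟩ := p
  subst hS
  exact reflTransGen_niceStep_of_card_sdiff_snd_le_one (hp.closedOut rfl) hp
    hp.1.closedOut_subset subset_rfl (by simp)

theorem IsSepOfOrderLE.closedIn {p : Finset V × Finset V} {T : Finset V}
    (hp : IsSepOfOrderLE E k p) (hT : p.1 = univ \ T) :
    IsSepOfOrderLE E k (univ \ T, closedIn E T) :=
  isSepOfOrderLE_swap_iff.1 ((isSepOfOrderLE_swap_iff.2 hp).closedOut hT)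

theorem reflTransGen_niceStep_closedIn {p : Finset V × Finset V} {T : Finset V}
    (hp : IsSepOfOrderLE E k p) (hT : p.1 = univ \ T) :
    ReflTransGen (NiceStep E k) p (univ \ T, closedIn E T) :=
  reflTransGen_niceStep_of_swap <|
    reflTransGen_niceStep_closedOut (isSepOfOrderLE_swap_iff.2 hp) hT

end Neighborhoods

theorem exists_tight_nice_gapless_chain_general (E : V → V → Prop) [DecidableRel E]
    (S T : Finset V) (k : ℕ)
    (h : ∃ C : List (Finset V × Finset V), IsSTChain E S T C ∧ Gapless C ∧ orderLE C k) :
    ∃ C : List (Finset V × Finset V),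
      IsSTChain E S T C ∧ Gapless C ∧ orderLE C k ∧ Tight E S T C ∧ Nice C := by
  obtain ⟨C, ⟨hC, hhead, hlast⟩, hgap, hord⟩ := h
  obtain ⟨c, l, rfl⟩ : ∃ c l, C = c :: l :=
    List.exists_cons_of_ne_nil (by rintro rfl; simp at hhead)
  set c' := (c :: l).getLast (List.cons_ne_nil c l)
  have hmem : ∀ p ∈ c :: l, IsSepOfOrderLE E k p := fun p hp => ⟨hC.1 p hp, hord p hp⟩
  have hc : c.2 = univ \ S := by simpa using hhead
  have hc' : c'.1 = univ \ T := by simpa [List.getLast?_eq_some_getLast] using hlast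
  obtain ⟨D, hD, hDlast⟩ := List.exists_isChain_cons_of_relationReflTransGen <|
    (reflTransGen_niceStep_closedOut (hmem c List.mem_cons_self) hc).trans <|
      (reflTransGen_niceStep_of_isSepChain hC hgap hord).trans <|
        reflTransGen_niceStep_closedIn (hmem c' (List.getLast_mem _)) hc'
  have hDsep : ∀ p ∈ _ :: D, IsSepOfOrderLE E k p := hD.backwards_cons_induction _ _ hDlast
    (fun _ _ h _ => h.1) ((hmem c' (List.getLast_mem _)).closedIn hc')
  have hDlast' : ((closedOut E S, univ \ S) :: D).getLast? = some (univ \ T, closedIn E T) := by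
    rw [List.getLast?_eq_some_getLast (List.cons_ne_nil _ _), hDlast]
  exact ⟨_ :: D,
    ⟨⟨fun p hp => (hDsep p hp).1, hD.imp fun _ _ h => h.2.2.1⟩, rfl, by simp [hDlast']⟩,
    hD.imp fun _ _ h => .inl h.2.2.2.1, fun p hp => (hDsep p hp).2, ⟨rfl, by simp [hDlast']⟩,
    hD.imp fun _ _ h => h.2.2.2⟩

/-- If `G` has a gapless `S`–`T` chain of order at most `k` then it has a tight, nice,
and gapless `S`–`T` chain of order at most `k`. -/
theorem exists_tight_nice_gapless_chain (E : V → V → Prop) [DecidableRel E]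
    (hirr : Irreflexive E) (S T : Finset V) (hST : Disjoint S T) (k : ℕ)
    (h : ∃ C : List (Finset V × Finset V), IsSTChain E S T C ∧ Gapless C ∧ orderLE C k) :
    ∃ C : List (Finset V × Finset V),
      IsSTChain E S T C ∧ Gapless C ∧ orderLE C k ∧ Tight E S T C ∧ Nice C :=
  exists_tight_nice_gapless_chain_general E S T k h

end AlmostSemicomplete
end

section
/- Let G be an h-semicomplete digraph, U ⊆ V(G), and k a positive integer. Then the number of vertices v ∈ V(G) ∖ U with d⁺(U ∪ {v}) ≤ k is at most h + 2k + 1. The analogous statement with out-degrees replaced by in-degrees (i.e., vertices v with d⁻(U ∪ {v}) ≤ k) also holds. -/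
namespace AlmostSemicomplete

variable {V : Type} [Fintype V] [DecidableEq V]

/-! Let `W` be the set of vertices counted. Every `v ∈ W` has at most `k` out-neighbours in `W`,
since they all lie in `N⁺(U ∪ {v})`. In-degrees and out-degrees within `W` have the same sum, so
some `v ∈ W` also has at most `k` in-neighbours in `W`; as `v` has at most `h` non-neighbours,
`|W| ≤ h + 2k + 1`.
The in-degree version is the out-degree version for the reversed digraph. -/

open Finset

theorem mem_openOut {E : V → V → Prop} [DecidableRel E] {U : Finset V} {u : V} :
    u ∈ openOut E U ↔ u ∉ U ∧ ∃ w ∈ U, E w u := by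
  simp only [openOut, closedOut, mem_sdiff, mem_biUnion, mem_insert, mem_filter, mem_univ,
    true_and]
  constructor
  · rintro ⟨⟨w, hw, rfl | hE⟩, hu⟩
    · exact absurd hw hu
    · exact ⟨hu, w, hw, hE⟩
  · rintro ⟨hu, w, hw, hE⟩
    exact ⟨⟨w, hw, Or.inr hE⟩, hu⟩

instance {E : V → V → Prop} [DecidableRel E] : DecidableRel (flip E) :=
  fun a b => ‹DecidableRel E› b a

theorem HSemicomplete.flip {E : V → V → Prop} [DecidableRel E] {h : ℕ}
    (hsemi : HSemicomplete E h) : HSemicomplete (flip E) h := by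
  intro v
  simpa only [Function.flip_def, and_comm (a := ¬E v _)] using hsemi v

theorem card_le_of_forall_card_outNbrs_le {E : V → V → Prop} [DecidableRel E] {h k : ℕ}
    (hsemi : HSemicomplete E h) {W : Finset V}
    (hW : ∀ v ∈ W, #{u ∈ W | v ≠ u ∧ E v u} ≤ k) : #W ≤ h + 2 * k + 1 := by
  rcases W.eq_empty_or_nonempty with rfl | hne
  · simp
  let R : V → V → Prop := fun a b => a ≠ b ∧ E a b
  have hin_sum : ∑ v ∈ W, #(W.bipartiteBelow R v) ≤ ∑ _v ∈ W, k := by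
    rw [← sum_card_bipartiteAbove_eq_sum_card_bipartiteBelow]
    exact sum_le_sum hW
  obtain ⟨v, hv, hin⟩ := exists_le_of_sum_le hne hin_sum
  have hcover : W ⊆ insert v (W.bipartiteAbove R v ∪ W.bipartiteBelow R v ∪
      ({u | u ≠ v ∧ ¬E u v ∧ ¬E v u} : Finset V)) := by
    intro u hu
    by_cases huv : u = v
    · exact huv ▸ mem_insert_self u _
    simp only [mem_insert, mem_union, bipartiteAbove, bipartiteBelow, mem_filter, mem_univ,
      true_and, R]
    tauto
  calc #W ≤ #(W.bipartiteAbove R v) + #(W.bipartiteBelow R v) + h + 1 := by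
        refine (card_le_card hcover).trans ((card_insert_le _ _).trans ?_)
        gcongr
        exact (card_union_le _ _).trans (add_le_add (card_union_le _ _) (hsemi v))
    _ ≤ h + 2 * k + 1 := by
        have hout : #(W.bipartiteAbove R v) ≤ k := hW v hv
        omega

theorem card_extensions_dOut_le (E : V → V → Prop) [DecidableRel E] {h : ℕ} (k : ℕ)
    (hsemi : HSemicomplete E h) (U : Finset V) :
    #{v | v ∉ U ∧ dOut E (insert v U) ≤ k} ≤ h + 2 * k + 1 := by
  refine card_le_of_forall_card_outNbrs_le hsemi fun v hv =>
    (card_le_card ?_).trans (mem_filter.1 hv).2.2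
  intro u hu
  simp only [mem_filter, mem_univ, true_and] at hu
  exact mem_openOut.2 ⟨by simp [hu.1.1, Ne.symm hu.2.1], v, mem_insert_self v U, hu.2.2⟩

theorem card_extensions_le_general (E : V → V → Prop) [DecidableRel E]
    (h k : ℕ)
    (hsemi : HSemicomplete E h) (U : Finset V) :
    (Finset.univ.filter fun v => v ∉ U ∧ dOut E (insert v U) ≤ k).card ≤ h + 2 * k + 1 ∧
    (Finset.univ.filter fun v => v ∉ U ∧ dIn E (insert v U) ≤ k).card ≤ h + 2 * k + 1 :=
  ⟨card_extensions_dOut_le E k hsemi U, card_extensions_dOut_le (flip E) k hsemi.flip U⟩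

/-- In an `h`-semicomplete digraph, for any `U ⊆ V(G)` and `k > 0`, the number of
vertices `v ∉ U` with `d⁺(U ∪ {v}) ≤ k` is at most `h + 2k + 1`; similarly for
in-degrees. -/
theorem card_extensions_le (E : V → V → Prop) [DecidableRel E]
    (hirr : Irreflexive E) (h k : ℕ) (hk : 0 < k)
    (hsemi : HSemicomplete E h) (U : Finset V) :
    (Finset.univ.filter fun v => v ∉ U ∧ dOut E (insert v U) ≤ k).card ≤ h + 2 * k + 1 ∧
    (Finset.univ.filter fun v => v ∉ U ∧ dIn E (insert v U) ≤ k).card ≤ h + 2 * k + 1 :=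
  card_extensions_le_general E h k hsemi U

end AlmostSemicomplete
end

section
/- Let G be a digraph, S and T disjoint vertex sets, and (X,Y) a non-trivial S–T separation, i.e., an S–T separation with X∖Y ≠ S and Y∖X ≠ T. Then μ(S, Y∖X) ≥ 1 and μ(X∖Y, T) ≥ 1, where μ(S,T) = 2·|V(G) ∖ (N⁺[S] ∪ N⁻[T])| + |N⁺(S) Δ N⁻(T)| and Δ denotes symmetric difference. -/
namespace AlmostSemicomplete

variable {V : Type} [Fintype V] [DecidableEq V]

/-! A witness `v ∈ (X ∖ Y) ∖ S` exists by non-triviality. No edge leaves `X ∖ Y` into `Y ∖ X`,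
so `v ∉ N⁻[Y ∖ X]`; hence `v` lies either outside `N⁺[S] ∪ N⁻[Y ∖ X]` (contributing `2`) or in
`N⁺(S) ∖ N⁻(Y ∖ X)` (contributing `1`). The bound for `μ(X ∖ Y, T)` is the same argument in the
reversed digraph, which swaps the roles of `N⁺` and `N⁻`. -/

section

variable {E : V → V → Prop}

theorem IsSTSep.subset_sdiff {S T X Y : Finset V} (h : IsSTSep E S T X Y) : S ⊆ X \ Y := by
  obtain ⟨⟨hcov, -⟩, hSY, -⟩ := h
  intro s hs
  have hsY : s ∉ Y := fun hsY => Finset.notMem_empty s (hSY ▸ Finset.mem_inter.mpr ⟨hs, hsY⟩)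
  have hsXY : s ∈ X ∪ Y := hcov ▸ Finset.mem_univ s
  exact Finset.mem_sdiff.mpr ⟨(Finset.mem_union.mp hsXY).resolve_right hsY, hsY⟩

theorem IsSep.notMem_closedIn_sdiff [DecidableRel E] {A B : Finset V} (h : IsSep E A B)
    {v : V} (hv : v ∈ A \ B) : v ∉ closedIn E (B \ A) := by
  obtain ⟨hvA, hvB⟩ := Finset.mem_sdiff.mp hv
  simp only [closedIn, Finset.mem_biUnion, Finset.mem_insert, Finset.mem_filter,
    Finset.mem_univ, true_and, Finset.mem_sdiff]
  rintro ⟨u, ⟨huB, huA⟩, rfl | hvu⟩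
  · exact hvB huB
  · exact h.2 v hvA hvB u huB huA hvu

theorem one_le_mu_of_notMem [DecidableRel E] {S T : Finset V} {v : V} (hvS : v ∉ S)
    (hvT : v ∉ closedIn E T) : 1 ≤ mu E S T := by
  unfold mu
  by_cases hv : v ∈ closedOut E S
  · have hv_symmDiff : v ∈ symmDiff (openOut E S) (openIn E T) :=
      Finset.mem_symmDiff.mpr <| Or.inl
        ⟨Finset.mem_sdiff.mpr ⟨hv, hvS⟩, fun h => hvT (Finset.mem_sdiff.mp h).1⟩
    have := Finset.card_pos.mpr ⟨v, hv_symmDiff⟩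
    omega
  · have hv_outside : v ∈ Finset.univ \ (closedOut E S ∪ closedIn E T) := by
      simp [hv, hvT]
    have := Finset.card_pos.mpr ⟨v, hv_outside⟩
    omega

theorem IsSTSep.one_le_mu [DecidableRel E] {S T X Y : Finset V} (h : IsSTSep E S T X Y)
    (hX : X \ Y ≠ S) : 1 ≤ mu E S (Y \ X) := by
  obtain ⟨v, hvXY, hvS⟩ : ∃ v ∈ X \ Y, v ∉ S := by
    by_contra! hall
    exact hX (Finset.Subset.antisymm hall h.subset_sdiff)
  exact one_le_mu_of_notMem hvS (h.1.notMem_closedIn_sdiff hvXY)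

instance [DecidableRel E] : DecidableRel (flip E) := fun a b => ‹DecidableRel E› b a

theorem IsSTSep.flip {S T X Y : Finset V} (h : IsSTSep E S T X Y) :
    IsSTSep (flip E) T S Y X := by
  obtain ⟨⟨hcov, hedge⟩, hSY, hTX⟩ := h
  exact ⟨⟨Finset.union_comm X Y ▸ hcov, fun b hbY hbX a haX haY => hedge a haX haY b hbY hbX⟩,
    hTX, hSY⟩

theorem mu_flip [DecidableRel E] (S T : Finset V) : mu (flip E) T S = mu E S T := by
  simp only [mu, Finset.union_comm (closedOut E S), symmDiff_comm (openOut E S)]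
  rfl

end

theorem mu_pos_of_nontrivial_general (E : V → V → Prop) [DecidableRel E]
    (S T : Finset V)
    (X Y : Finset V) (hsep : IsSTSep E S T X Y)
    (hX : X \ Y ≠ S) (hY : Y \ X ≠ T) :
    1 ≤ mu E S (Y \ X) ∧ 1 ≤ mu E (X \ Y) T :=
  ⟨hsep.one_le_mu hX, mu_flip (E := E) (X \ Y) T ▸ hsep.flip.one_le_mu hY⟩

/-- For a non-trivial `S`–`T` separation `(X,Y)`, both `μ(S, Y∖X)` and `μ(X∖Y, T)`
are at least `1`. -/
theorem mu_pos_of_nontrivial (E : V → V → Prop) [DecidableRel E] (hirr : Irreflexive E)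
    (S T : Finset V) (hST : Disjoint S T)
    (X Y : Finset V) (hsep : IsSTSep E S T X Y)
    (hX : X \ Y ≠ S) (hY : Y \ X ≠ T) :
    1 ≤ mu E S (Y \ X) ∧ 1 ≤ mu E (X \ Y) T :=
  mu_pos_of_nontrivial_general E S T X Y hsep hX hY

end AlmostSemicomplete
end

section
/- Let G be a semicomplete digraph on n vertices and let d₁, d₂ be nonnegative integers with d₁ + d₂ < n. Then |{v ∈ V(G) : d⁺(v) ≥ d₁ and d⁻(v) ≥ d₂}| ≤ n − (d₁ + d₂) + 2·pw(G). -/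
namespace AlmostSemicomplete

variable {V : Type} [Fintype V] [DecidableEq V]

/-!
Take a path decomposition of width `p = pw(G)` and let each vertex `v` occupy the bags with
indices in `[l v, r v]`, so that an edge `u → v` forces `l v ≤ r u`. Let `W` be the set of
vertices to be counted, `s` the least `r v` and `t` the largest `l v` over `v ∈ W`. The closed
out-neighbourhood of a vertex of `W` with `r = s` consists of vertices with `l ≤ s`, so at
least `d₁ + 1` vertices have `l ≤ s`, and all of them except the at most `p + 1` in bag `s` have
`r < s`; symmetrically at least `d₂ - p` vertices have `l > t`. If `s ≤ t`, these two sets and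
`W` are pairwise disjoint, which gives the bound; if `t < s`, all of `W` lies in bag `t`.
-/

open Finset

section

omit [DecidableEq V]

/-- The interval form of a path decomposition: vertex `v` occupies the bags indexed by
`[left v, right v]`. -/
structure IntervalModel (E : V → V → Prop) (ι : Type*) [LinearOrder ι] where
  left : V → ι
  right : V → ι
  left_le_right : ∀ v, left v ≤ right v
  left_le_right_of_adj : ∀ ⦃u v⦄, E u v → left v ≤ right u

namespace IntervalModel

variable {E : V → V → Prop} {ι : Type*} [LinearOrder ι] (M : IntervalModel E ι)

def bag (i : ι) : Finset V :=
  {v | M.left v ≤ i ∧ i ≤ M.right v}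

theorem mem_bag {v : V} {i : ι} : v ∈ M.bag i ↔ M.left v ≤ i ∧ i ≤ M.right v := by
  simp [bag]

def reverse : IntervalModel (flip E) ιᵒᵈ where
  left v := OrderDual.toDual (M.right v)
  right v := OrderDual.toDual (M.left v)
  left_le_right v := M.left_le_right v
  left_le_right_of_adj _ _ h := M.left_le_right_of_adj h

theorem bag_reverse (i : ι) : M.reverse.bag (OrderDual.toDual i) = M.bag i := by
  ext v
  simp only [mem_bag, reverse, OrderDual.toDual_le_toDual]
  exact and_comm

theorem succ_le_card_filter_left_le_of_le_dOutV [DecidableRel E] {v : V} (hv : ¬ E v v)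
    {d : ℕ} (hd : d ≤ dOutV E v) : d + 1 ≤ #{w | M.left w ≤ M.right v} := by
  classical
  have hsub : insert v (NoutV E v) ⊆ ({w | M.left w ≤ M.right v} : Finset V) := by
    intro w hw
    rcases mem_insert.1 hw with rfl | hw
    · simpa using M.left_le_right w
    · simpa using M.left_le_right_of_adj (mem_filter.1 hw).2
  have hv : v ∉ NoutV E v := by simpa [NoutV] using hv
  have := card_le_card hsub
  rw [card_insert_of_notMem hv] at this
  exact (Nat.succ_le_succ hd).trans this

theorem card_filter_left_le_le (i : ι) :
    #{w | M.left w ≤ i} ≤ #{w | M.right w < i} + #(M.bag i) := by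
  classical
  refine (card_le_card fun w hw => ?_).trans (card_union_le _ _)
  have hw : M.left w ≤ i := (mem_filter.1 hw).2
  rcases lt_or_ge (M.right w) i with h | h
  · exact mem_union_left _ (by simpa using h)
  · exact mem_union_right _ (M.mem_bag.2 ⟨hw, h⟩)

theorem succ_le_card_filter_le_right_of_le_dInV [DecidableRel E] {v : V} (hv : ¬ E v v)
    {d : ℕ} (hd : d ≤ dInV E v) : d + 1 ≤ #{u | M.left v ≤ M.right u} :=
  letI : DecidableRel (flip E) := fun a b => inferInstanceAs (Decidable (E b a))
  M.reverse.succ_le_card_filter_left_le_of_le_dOutV hv hd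

theorem card_filter_le_right_le (i : ι) :
    #{u | i ≤ M.right u} ≤ #{u | i < M.left u} + #(M.bag i) :=
  M.bag_reverse i ▸ M.reverse.card_filter_left_le_le (OrderDual.toDual i)

theorem card_add_card_filter_right_lt_add_card_filter_lt_left_le {W : Finset V} {s t : ι}
    (hst : s ≤ t) (hW : ∀ v ∈ W, s ≤ M.right v ∧ M.left v ≤ t) :
    #W + #{v | M.right v < s} + #{v | t < M.left v} ≤ Fintype.card V := by
  classical
  have hWA : Disjoint W ({v | M.right v < s} : Finset V) :=
    disjoint_left.2 fun v hv hA => (mem_filter.1 hA).2.not_ge (hW v hv).1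
  have hWB : Disjoint W ({v | t < M.left v} : Finset V) :=
    disjoint_left.2 fun v hv hB => (mem_filter.1 hB).2.not_ge (hW v hv).2
  have hAB : Disjoint ({v | M.right v < s} : Finset V) ({v | t < M.left v} : Finset V) :=
    disjoint_left.2 fun v hA hB =>
      ((mem_filter.1 hA).2.trans_le (hst.trans (mem_filter.1 hB).2.le)).not_ge
        (M.left_le_right v)
  rw [← card_union_of_disjoint hWA, ← card_union_of_disjoint (disjoint_union_left.2 ⟨hWB, hAB⟩)]
  exact card_le_univ _

theorem card_filter_degree_le [DecidableRel E] (hirr : ∀ v, ¬ E v v) (k : ℕ)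
    (hk : ∀ i, #(M.bag i) ≤ k + 1) {d₁ d₂ : ℕ} (hd : d₁ + d₂ < Fintype.card V) :
    #{v | d₁ ≤ dOutV E v ∧ d₂ ≤ dInV E v} ≤ Fintype.card V - (d₁ + d₂) + 2 * k := by
  set W : Finset V := {v | d₁ ≤ dOutV E v ∧ d₂ ≤ dInV E v}
  rcases W.eq_empty_or_nonempty with hempty | hne
  · simp [hempty]
  obtain ⟨v₀, hv₀, hs⟩ := exists_mem_eq_inf' hne M.right
  obtain ⟨v₁, hv₁, ht⟩ := exists_mem_eq_sup' hne M.left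
  set s := W.inf' hne M.right
  set t := W.sup' hne M.left
  have hWst : ∀ v ∈ W, s ≤ M.right v ∧ M.left v ≤ t :=
    fun v hv => ⟨inf'_le _ hv, le_sup' M.left hv⟩
  rcases lt_or_ge t s with hts | hst
  · have hWt : W ⊆ M.bag t := fun v hv =>
      M.mem_bag.2 ⟨(hWst v hv).2, hts.le.trans (hWst v hv).1⟩
    have := (card_le_card hWt).trans (hk t)
    omega
  · have hA : d₁ ≤ #{v | M.right v < s} + k := by
      have := hs ▸ M.succ_le_card_filter_left_le_of_le_dOutV (hirr v₀) (mem_filter.1 hv₀).2.1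
      have := M.card_filter_left_le_le s
      have := hk s
      omega
    have hB : d₂ ≤ #{v | t < M.left v} + k := by
      have := ht ▸ M.succ_le_card_filter_le_right_of_le_dInV (hirr v₁) (mem_filter.1 hv₁).2.2
      have := M.card_filter_le_right_le t
      have := hk t
      omega
    have := M.card_add_card_filter_right_lt_add_card_filter_lt_left_le hst hWst
    omega

end IntervalModel

omit [Fintype V] in
theorem card_le_pdWidth_add_one {m : ℕ} (X : Fin m → Finset V) (i : Fin m) :
    #(X i) ≤ pdWidth X + 1 := by
  have := le_sup (f := fun i => #(X i)) (mem_univ i)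
  unfold pdWidth
  omega

theorem exists_isPathDecomp_pdWidth_eq_pathwidth (E : V → V → Prop) :
    ∃ (m : ℕ) (X : Fin m → Finset V), IsPathDecomp E X ∧ pdWidth X = pathwidth E :=
  Nat.sInf_mem (s := {k | ∃ (m : ℕ) (X : Fin m → Finset V), IsPathDecomp E X ∧ pdWidth X = k})
    ⟨_, 1, fun _ => univ, ⟨fun v => ⟨0, mem_univ v⟩,
      fun u v _ => ⟨0, 0, le_rfl, mem_univ u, mem_univ v⟩, fun v _ _ _ _ _ _ _ => mem_univ v⟩, rfl⟩

end

namespace IsPathDecomp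

variable {E : V → V → Prop} {m : ℕ} {X : Fin m → Finset V}

omit [Fintype V] in
theorem occurrences_nonempty (hX : IsPathDecomp E X) (v : V) :
    ({i | v ∈ X i} : Finset (Fin m)).Nonempty := by
  obtain ⟨i, hi⟩ := hX.1 v
  exact ⟨i, by simpa using hi⟩

noncomputable def intervalModel (hX : IsPathDecomp E X) : IntervalModel E (Fin m) where
  left v := ({i | v ∈ X i} : Finset (Fin m)).min' (hX.occurrences_nonempty v)
  right v := ({i | v ∈ X i} : Finset (Fin m)).max' (hX.occurrences_nonempty v)
  left_le_right v := min'_le_max' _ (hX.occurrences_nonempty v)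
  left_le_right_of_adj u v huv := by
    obtain ⟨i, j, hji, hu, hv⟩ := hX.2.1 u v huv
    exact (min'_le _ j (by simpa using hv)).trans (hji.trans (le_max' _ i (by simpa using hu)))

theorem bag_intervalModel_subset (hX : IsPathDecomp E X) (i : Fin m) :
    hX.intervalModel.bag i ⊆ X i := by
  intro v hv
  obtain ⟨hl, hr⟩ := hX.intervalModel.mem_bag.1 hv
  have hmin := min'_mem _ (hX.occurrences_nonempty v)
  have hmax := max'_mem _ (hX.occurrences_nonempty v)
  exact hX.2.2 v _ i _ hl hr (mem_filter.1 hmin).2 (mem_filter.1 hmax).2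

end IsPathDecomp

theorem card_degree_interval_le_general (E : V → V → Prop) [DecidableRel E]
    (hirr : Irreflexive E)
    (n d₁ d₂ : ℕ) (hn : Fintype.card V = n) (hd : d₁ + d₂ < n) :
    (Finset.univ.filter fun v => d₁ ≤ dOutV E v ∧ d₂ ≤ dInV E v).card
      ≤ n - (d₁ + d₂) + 2 * pathwidth E := by
  obtain ⟨m, X, hX, hwidth⟩ := exists_isPathDecomp_pdWidth_eq_pathwidth E
  subst hn
  refine hX.intervalModel.card_filter_degree_le hirr (pathwidth E) (fun i => ?_) hd
  calc #(hX.intervalModel.bag i) ≤ #(X i) := card_le_card (hX.bag_intervalModel_subset i)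
    _ ≤ pathwidth E + 1 := hwidth ▸ card_le_pdWidth_add_one X i

/-- In a semicomplete digraph on `n` vertices:
`|{v : d⁺(v) ≥ d₁ ∧ d⁻(v) ≥ d₂}| ≤ n − (d₁ + d₂) + 2·pw(G)` whenever `d₁ + d₂ < n`. -/
theorem card_degree_interval_le (E : V → V → Prop) [DecidableRel E]
    (hirr : Irreflexive E) (hsc : Semicomplete E)
    (n d₁ d₂ : ℕ) (hn : Fintype.card V = n) (hd : d₁ + d₂ < n) :
    (Finset.univ.filter fun v => d₁ ≤ dOutV E v ∧ d₂ ≤ dInV E v).card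
      ≤ n - (d₁ + d₂) + 2 * pathwidth E :=
  card_degree_interval_le_general E hirr n d₁ d₂ hn hd

end AlmostSemicomplete
end

section
/- Let G be a semicomplete digraph on n vertices and let l, k, d be positive integers. If G has a set of l pairwise vertex-disjoint directed paths, each starting at a vertex of out-degree at most d and ending at a vertex of out-degree at least d + k, then pw(G) ≥ min{l, k}. -/
namespace AlmostSemicomplete

variable {V : Type} [Fintype V] [DecidableEq V]

private lemma chain_all_of_chain {α : Type*} {R : α → α → Prop} {Q : α → Prop} :
    ∀ (a : α) (L : List α), List.Chain R a L →
      (∀ x y, R x y → y ∈ L → Q x → Q y) → Q a → ∀ x ∈ L, Q x := by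
  intro a L h
  induction L generalizing a with
  | nil => intro _ _ x hx; cases hx
  | cons b l ih =>
      have hab : R a b := (List.isChain_cons_cons.mp h).1
      have hbl : List.Chain R b l := (List.isChain_cons_cons.mp h).2
      intro hstep hQa x hx
      have hQb : Q b := hstep a b hab (List.mem_cons_self (a := b) (l := l)) hQa
      rcases List.mem_cons.mp hx with rfl | hx'
      · exact hQb
      · exact ih b hbl (fun u v huv hv => hstep u v huv (List.mem_cons_of_mem _ hv)) hQb x hx'

private lemma chain'_getLast_prop {α : Type*} {R : α → α → Prop} {Q : α → Prop}
    (L : List α) (hc : List.Chain' R L) (hne : L ≠ [])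
    (hstep : ∀ x y, R x y → y ∈ L → Q x → Q y)
    (hhead : Q (L.head hne)) : Q (L.getLast hne) := by
  obtain ⟨a, tl, rfl⟩ := List.exists_cons_of_ne_nil hne
  have hch : List.Chain R a tl := hc
  have hhd : Q a := by simpa using hhead
  have hall : ∀ x ∈ tl, Q x :=
    chain_all_of_chain a tl hch
      (fun x y h hy => hstep x y h (List.mem_cons_of_mem _ hy)) hhd
  cases tl with
  | nil => simpa using hhd
  | cons b tl' =>
      rw [List.getLast_cons (List.cons_ne_nil b tl')]
      exact hall _ (List.getLast_mem _)

/-- If a semicomplete digraph has `l` pairwise vertex-disjoint directed paths, each from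
a vertex of out-degree at most `d` to a vertex of out-degree at least `d + k`, then
`pw(G) ≥ min{l, k}`. -/
theorem pathwidth_ge_of_disjoint_paths (E : V → V → Prop) [DecidableRel E]
    (hirr : Irreflexive E) (hsc : Semicomplete E)
    (l k d : ℕ) (hl : 0 < l) (hk : 0 < k) (hd : 0 < d)
    (P : Fin l → List V)
    (hchain : ∀ i, List.Chain' E (P i))
    (hnodup : ∀ i, (P i).Nodup)
    (hne : ∀ i, P i ≠ [])
    (hstart : ∀ (i) (hi : P i ≠ []), dOutV E ((P i).head hi) ≤ d)
    (hend : ∀ (i) (hi : P i ≠ []), d + k ≤ dOutV E ((P i).getLast hi))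
    (hdisj : ∀ i j, i ≠ j → ∀ v ∈ P i, v ∉ P j) :
    min l k ≤ pathwidth E := by
  classical
  have main : ∀ (m : ℕ) (X : Fin m → Finset V), IsPathDecomp E X →
      (∀ t, (X t).card ≤ min l k) → False := by
    intro m X hdec hb
    have hbag : ∀ v : V, ((Finset.univ : Finset (Fin m)).filter fun i => v ∈ X i).Nonempty := by
      intro v
      obtain ⟨i, hi⟩ := hdec.1 v
      exact ⟨i, Finset.mem_filter.mpr ⟨Finset.mem_univ i, hi⟩⟩
    set f : V → Fin m := fun v => ((Finset.univ : Finset (Fin m)).filter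
      fun i => v ∈ X i).min' (hbag v) with hfdef
    set g : V → Fin m := fun v => ((Finset.univ : Finset (Fin m)).filter
      fun i => v ∈ X i).max' (hbag v) with hgdef
    have hmemf : ∀ v, v ∈ X (f v) := fun v =>
      (Finset.mem_filter.mp (Finset.min'_mem _ (hbag v))).2
    have hmemg : ∀ v, v ∈ X (g v) := fun v =>
      (Finset.mem_filter.mp (Finset.max'_mem _ (hbag v))).2
    have hle_f : ∀ v t, v ∈ X t → f v ≤ t := fun v t ht =>
      Finset.min'_le ((Finset.univ : Finset (Fin m)).filter fun i => v ∈ X i) t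
        (Finset.mem_filter.mpr ⟨Finset.mem_univ _, ht⟩)
    have hle_g : ∀ v t, v ∈ X t → t ≤ g v := fun v t ht =>
      Finset.le_max' ((Finset.univ : Finset (Fin m)).filter fun i => v ∈ X i) t
        (Finset.mem_filter.mpr ⟨Finset.mem_univ _, ht⟩)
    have hfg : ∀ v, f v ≤ g v := fun v => hle_f v (g v) (hmemg v)
    have hconv : ∀ v t, f v ≤ t → t ≤ g v → v ∈ X t := fun v t h1 h2 =>
      hdec.2.2 v (f v) t (g v) h1 h2 (hmemf v) (hmemg v)
    have hedge : ∀ u v, E u v → f v ≤ g u := by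
      intro u v h
      obtain ⟨i, j, hij, hu, hv⟩ := hdec.2.1 u v h
      exact le_trans (hle_f v j hv) (le_trans hij (hle_g u i hu))
    have hforce : ∀ u x, g x < f u → E u x := by
      intro u x h
      have hxu : x ≠ u := by
        intro he; subst he; exact absurd (hfg x) (not_le.mpr h)
      rcases hsc u x hxu.symm with h1 | h2
      · exact h1
      · exact absurd (hedge x u h2) (not_le.mpr h)
    have h2deg : ∀ v : V, dOutV E v + 1 ≤
        ((Finset.univ : Finset V).filter fun x => f x ≤ g v).card := by
      intro v
      have hsub : insert v (NoutV E v) ⊆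
          (Finset.univ : Finset V).filter fun x => f x ≤ g v := by
        intro x hx
        rcases Finset.mem_insert.mp hx with rfl | hx'
        · exact Finset.mem_filter.mpr ⟨Finset.mem_univ _, hfg x⟩
        · have hE : E v x := (Finset.mem_filter.mp hx').2
          exact Finset.mem_filter.mpr ⟨Finset.mem_univ _, hedge v x hE⟩
      have hnm : v ∉ NoutV E v := by
        intro hmem; exact hirr v ((Finset.mem_filter.mp hmem).2)
      have hcard := Finset.card_le_card hsub
      rw [Finset.card_insert_of_notMem hnm] at hcard
      exact hcard
    have h3sub : ∀ τ : Fin m, ((Finset.univ : Finset V).filter fun x => f x ≤ τ) ⊆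
        ((Finset.univ : Finset V).filter fun x => g x < τ) ∪ X τ := by
      intro τ x hx
      have hfx : f x ≤ τ := (Finset.mem_filter.mp hx).2
      by_cases hgx : g x < τ
      · exact Finset.mem_union_left _ (Finset.mem_filter.mpr ⟨Finset.mem_univ _, hgx⟩)
      · exact Finset.mem_union_right _ (hconv x τ hfx (not_lt.mp hgx))
    have h4deg : ∀ (u : V) (τ : Fin m), τ ≤ f u →
        ((Finset.univ : Finset V).filter fun x => g x < τ).card ≤ dOutV E u := by
      intro u τ hτ
      apply Finset.card_le_card
      intro x hx
      have hgx : g x < τ := (Finset.mem_filter.mp hx).2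
      exact Finset.mem_filter.mpr ⟨Finset.mem_univ _, hforce u x (lt_of_lt_of_le hgx hτ)⟩
    set st : Fin l → V := fun j => (P j).head (hne j) with hstdef
    set en : Fin l → V := fun j => (P j).getLast (hne j) with hendef
    have hstmem : ∀ j, st j ∈ P j := fun j => List.head_mem (hne j)
    have henmem : ∀ j, en j ∈ P j := fun j => List.getLast_mem (hne j)
    obtain ⟨i0, -, hi0⟩ := Finset.exists_max_image (Finset.univ : Finset (Fin l))
      (fun j => f (st j)) ⟨⟨0, hl⟩, Finset.mem_univ _⟩
    obtain ⟨j0, -, hj0⟩ := Finset.exists_min_image (Finset.univ : Finset (Fin l))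
      (fun j => g (en j)) ⟨⟨0, hl⟩, Finset.mem_univ _⟩
    set F : Fin m := f (st i0) with hFdef
    set T : Fin m := g (en j0) with hTdef
    have hFmax : ∀ j, f (st j) ≤ F := fun j => hi0 j (Finset.mem_univ j)
    have hTmin : ∀ j, T ≤ g (en j) := fun j => hj0 j (Finset.mem_univ j)
    have hdu : dOutV E (st i0) ≤ d := hstart i0 (hne i0)
    have hde : d + k ≤ dOutV E (en j0) := hend j0 (hne j0)
    have hFT : F ≤ T := by
      by_contra hA
      push_neg at hA
      have h1 : dOutV E (en j0) + 1 ≤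
          ((Finset.univ : Finset V).filter fun x => f x ≤ T).card := h2deg (en j0)
      have h2' : ((Finset.univ : Finset V).filter fun x => f x ≤ T).card ≤
          (((Finset.univ : Finset V).filter fun x => g x < T) ∪ X T).card :=
        Finset.card_le_card (h3sub T)
      have h3' := Finset.card_union_le
        ((Finset.univ : Finset V).filter fun x => g x < T) (X T)
      have h4' : ((Finset.univ : Finset V).filter fun x => g x < T).card ≤
          dOutV E (st i0) := h4deg (st i0) T (le_of_lt hA)
      have h5' := hb T
      have hmlk : min l k ≤ k := min_le_right l k
      omega
    have hhit : ∀ t : Fin m, F ≤ t → t ≤ T → ∀ i : Fin l, ∃ v, v ∈ P i ∧ v ∈ X t := by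
      intro t h1 h2 i
      by_contra hcon
      push_neg at hcon
      have hstep : ∀ x y, E x y → y ∈ P i → g x < t → g y < t := by
        intro x y hxy hyP hgx
        by_contra hgy
        push_neg at hgy
        exact hcon y hyP (hconv y t (le_of_lt (lt_of_le_of_lt (hedge x y hxy) hgx)) hgy)
      have hhead : g ((P i).head (hne i)) < t := by
        by_contra hgy
        push_neg at hgy
        exact hcon _ (hstmem i) (hconv _ t (le_trans (hFmax i) h1) hgy)
      have hlast := chain'_getLast_prop (P i) (hchain i) (hne i) hstep hhead
      exact absurd (le_trans h2 (hTmin i)) (not_le.mpr hlast)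
    by_cases hlk : l ≤ k
    · -- case l ≤ k
      have hmin : min l k = l := min_eq_left hlk
      have hXeq : ∀ t : Fin m, F ≤ t → t ≤ T → ∃ φ : Fin l → V,
          (∀ i, φ i ∈ P i ∧ φ i ∈ X t) ∧ ∀ x ∈ X t, ∃ i, φ i = x := by
        intro t h1 h2
        choose φ hφP hφX using hhit t h1 h2
        have hinj : Set.InjOn φ ↑(Finset.univ : Finset (Fin l)) := by
          intro a _ b _ hab
          by_contra hab'
          exact hdisj a b hab' (φ a) (hφP a) (hab ▸ hφP b)
        have himg : Finset.image φ Finset.univ = X t := by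
          apply Finset.eq_of_subset_of_card_le
          · intro x hx
            obtain ⟨a, -, rfl⟩ := Finset.mem_image.mp hx
            exact hφX a
          · rw [Finset.card_image_of_injOn hinj, Finset.card_univ, Fintype.card_fin]
            calc (X t).card ≤ min l k := hb t
            _ = l := hmin
        refine ⟨φ, fun i => ⟨hφP i, hφX i⟩, fun x hx => ?_⟩
        obtain ⟨a, -, ha⟩ := Finset.mem_image.mp (himg ▸ hx)
        exact ⟨a, ha⟩
      have huni : ∀ t, F ≤ t → t ≤ T → ∀ i : Fin l, ∀ v v', v ∈ P i → v ∈ X t →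
          v' ∈ P i → v' ∈ X t → v = v' := by
        intro t h1 h2 i v v' hv hvX hv' hv'X
        obtain ⟨φ, hφ, hs⟩ := hXeq t h1 h2
        have hv1 : φ i = v := by
          obtain ⟨a, ha⟩ := hs v hvX
          have hai : a = i := by
            by_contra hai'
            exact hdisj a i hai' v (ha ▸ (hφ a).1) hv
          rwa [hai] at ha
        have hv2 : φ i = v' := by
          obtain ⟨a, ha⟩ := hs v' hv'X
          have hai : a = i := by
            by_contra hai'
            exact hdisj a i hai' v' (ha ▸ (hφ a).1) hv'
          rwa [hai] at ha
        rw [← hv1, hv2]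
      have hsur : ∀ t, F ≤ t → t ≤ T → ∀ x ∈ X t, ∃ i, x ∈ P i := by
        intro t h1 h2 x hx
        obtain ⟨φ, hφ, hs⟩ := hXeq t h1 h2
        obtain ⟨a, ha⟩ := hs x hx
        exact ⟨a, ha ▸ (hφ a).1⟩
      choose W hWP hWX using hhit F le_rfl hFT
      have hWg : ∀ i, T ≤ g (W i) := by
        intro i
        by_contra hgw
        push_neg at hgw
        have hstep : ∀ x y, E x y → y ∈ P i →
            (x = W i ∨ g x < F) → (y = W i ∨ g y < F) := by
          intro x y hxy hyP hQx
          by_cases hgy : g y < F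
          · exact Or.inr hgy
          push_neg at hgy
          left
          rcases hQx with rfl | hdead
          · have hfy : f y ≤ g (W i) := hedge (W i) y hxy
            have hτ1 : F ≤ max (f y) F := le_max_right _ _
            have hτ2 : max (f y) F ≤ T := max_le (le_of_lt (lt_of_le_of_lt hfy hgw)) hFT
            have hyX : y ∈ X (max (f y) F) :=
              hconv y _ (le_max_left _ _) (max_le (hfg y) hgy)
            have hWX' : W i ∈ X (max (f y) F) :=
              hconv _ _ (le_trans (hle_f _ _ (hWX i)) hτ1)
                (max_le hfy (hle_g _ _ (hWX i)))
            exact huni _ hτ1 hτ2 i y (W i) hyP hyX (hWP i) hWX'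
          · have hfy : f y < F := lt_of_le_of_lt (hedge x y hxy) hdead
            have hyX : y ∈ X F := hconv y F (le_of_lt hfy) hgy
            exact huni F le_rfl hFT i y (W i) hyP hyX (hWP i) (hWX i)
        have hhead : (P i).head (hne i) = W i ∨ g ((P i).head (hne i)) < F := by
          by_cases hgs : g (st i) < F
          · exact Or.inr hgs
          · push_neg at hgs
            exact Or.inl (huni F le_rfl hFT i (st i) (W i) (hstmem i)
              (hconv _ F (hFmax i) hgs) (hWP i) (hWX i))
        have hlast := chain'_getLast_prop (P i) (hchain i) (hne i) hstep hhead
        rcases hlast with heq | hdead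
        · have hTi : T ≤ g ((P i).getLast (hne i)) := hTmin i
          rw [heq] at hTi
          exact absurd hTi (not_le.mpr hgw)
        · exact absurd (le_trans hFT (hTmin i)) (not_le.mpr hdead)
      have hempty : ∀ x : V, g x < T → g x < F := by
        intro x hx
        by_contra hge
        push_neg at hge
        obtain ⟨i, hiP⟩ := hsur (g x) hge (le_of_lt hx) x (hmemg x)
        have hWX' : W i ∈ X (g x) :=
          hconv _ _ (le_trans (hle_f _ _ (hWX i)) hge)
            (le_trans (le_of_lt hx) (hWg i))
        have hxW : x = W i :=
          huni (g x) hge (le_of_lt hx) i x (W i) hiP (hmemg x) (hWP i) hWX'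
        rw [hxW] at hx
        exact absurd (hWg i) (not_le.mpr hx)
      have h1 : dOutV E (en j0) + 1 ≤
          ((Finset.univ : Finset V).filter fun x => f x ≤ T).card := h2deg (en j0)
      have h2' : ((Finset.univ : Finset V).filter fun x => f x ≤ T).card ≤
          (((Finset.univ : Finset V).filter fun x => g x < T) ∪ X T).card :=
        Finset.card_le_card (h3sub T)
      have h3' := Finset.card_union_le
        ((Finset.univ : Finset V).filter fun x => g x < T) (X T)
      have h5 : ((Finset.univ : Finset V).filter fun x => g x < T).card ≤
          ((Finset.univ : Finset V).filter fun x => g x < F).card := by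
        apply Finset.card_le_card
        intro x hx
        exact Finset.mem_filter.mpr
          ⟨Finset.mem_univ _, hempty x (Finset.mem_filter.mp hx).2⟩
      have h6 : ((Finset.univ : Finset V).filter fun x => g x < F).card ≤
          dOutV E (st i0) := h4deg (st i0) F le_rfl
      have h7 := hb T
      omega
    · -- case k < l
      push_neg at hlk
      have hmin : min l k = k := min_eq_right (le_of_lt hlk)
      choose φ hφP hφX using hhit T hFT le_rfl
      have hinj : Set.InjOn φ ↑(Finset.univ : Finset (Fin l)) := by
        intro a _ b _ hab
        by_contra hab'
        exact hdisj a b hab' (φ a) (hφP a) (hab ▸ hφP b)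
      have hcard : l ≤ (X T).card := by
        calc l = (Finset.univ : Finset (Fin l)).card := by simp
        _ ≤ (X T).card := Finset.card_le_card_of_injOn φ (fun a _ => hφX a) hinj
      have := hb T
      omega
  show min l k ≤ sInf _
  apply le_csInf
  · refine ⟨pdWidth (fun _ : Fin 1 => (Finset.univ : Finset V)), 1,
      fun _ => Finset.univ, ⟨fun v => ⟨0, Finset.mem_univ v⟩,
      fun u v _ => ⟨0, 0, le_refl 0, Finset.mem_univ u, Finset.mem_univ v⟩,
      fun v i j k _ _ _ _ => Finset.mem_univ v⟩, rfl⟩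
  · intro w hw
    by_contra hcon
    push_neg at hcon
    obtain ⟨m, X, hdec, hwid⟩ := hw
    have hM : 1 ≤ min l k := le_min hl hk
    have hs : Finset.univ.sup (fun i => (X i).card) - 1 = w := hwid
    have hbags : ∀ t, (X t).card ≤ min l k := by
      intro t
      have ht : (X t).card ≤ Finset.univ.sup (fun i => (X i).card) :=
        Finset.le_sup (f := fun i => (X i).card) (Finset.mem_univ t)
      omega
    exact absurd (main m X hdec hbags) (fun h => h)

end AlmostSemicomplete
end
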